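/- arXiv:1106.4135 — 2 statements merged into one kernel-verified Lean document; each statement's English description precedes it below -/
import Mathlib

section
/- If a Hausdorff topological space X is quasi-developable and the subspace X^d of non-isolated points is perfect (every closed subset of X^d is a Gδ-set in X^d), then X has a development at non-isolated points. -/
open Set Topology Filter Function

/-- `st(x, 𝒰) = ⋃ {P ∈ 𝒰 : x ∈ P}`. -/
def stpt {X : Type*} (x : X) (𝒰 : Set (Set X)) : Set X := ⋃₀ {P ∈ 𝒰 | x ∈ P}

/-- The set `X^d` of non-isolated points of `X`. -/
def nonIsolatedPoints (X : Type*) [TopologicalSpace X] : Set X :=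
  {x : X | ¬IsOpen ({x} : Set X)}

/-- A development at non-isolated points: a sequence of open covers of `X` such that
the stars at each non-isolated point form a neighborhood base there. -/
def IsDevelopmentAtNonIsolatedPoints {X : Type*} [TopologicalSpace X]
    (𝒰 : ℕ → Set (Set X)) : Prop :=
  (∀ n, ∀ P ∈ 𝒰 n, IsOpen P) ∧ (∀ n, ⋃₀ 𝒰 n = Set.univ) ∧
    ∀ x ∈ nonIsolatedPoints X, ∀ U : Set X, x ∈ U → IsOpen U →
      ∃ n, stpt x (𝒰 n) ⊆ U

/-- A quasi-development for `X`. -/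
def IsQuasiDevelopment {X : Type*} [TopologicalSpace X] (𝒰 : ℕ → Set (Set X)) : Prop :=
  (∀ n, ∀ P ∈ 𝒰 n, IsOpen P) ∧
    ∀ (x : X) (U : Set X), x ∈ U → IsOpen U →
      ∃ n, x ∈ stpt x (𝒰 n) ∧ stpt x (𝒰 n) ⊆ U

/-- A `g`-function for `X`. -/
def IsGFunction {X : Type*} [TopologicalSpace X] (g : ℕ → X → Set X) : Prop :=
  (∀ n x, IsOpen (g n x)) ∧ (∀ n x, x ∈ g n x) ∧ ∀ n x, g (n + 1) x ⊆ g n x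

/-!
Let `𝒰` be a quasi-development and `Vₙ = ⋃₀ 𝒰ₙ`. As `Xᵈ` is closed and perfect, the relatively
open set `Vₙ ∩ Xᵈ` is covered by countably many closed sets `Fₙₖ ⊆ Vₙ`. Adjoining `X \ Fₙₖ` to
`𝒰ₙ` gives an open cover of `X` whose star at any point of `Fₙₖ` is still `st(x, 𝒰ₙ)`. For
`x ∈ Xᵈ` inside an open `U`, take `n` with `x ∈ st(x, 𝒰ₙ) ⊆ U`; then `x ∈ Vₙ`, so `x ∈ Fₙₖ`
for some `k`, and the cover indexed by `(n, k)` has its star at `x` inside `U`.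
-/

lemma isClosed_nonIsolatedPoints (X : Type*) [TopologicalSpace X] :
    IsClosed (nonIsolatedPoints X) := by
  have : (nonIsolatedPoints X)ᶜ = ⋃ x ∈ {x : X | IsOpen ({x} : Set X)}, {x} := by
    ext y
    simp [nonIsolatedPoints]
  exact isOpen_compl_iff.mp (this ▸ isOpen_biUnion fun _ hx => hx)

section Star

variable {X : Type*} {x : X} {A : Set X} {𝒰 : Set (Set X)}

lemma mem_stpt_self_iff : x ∈ stpt x 𝒰 ↔ x ∈ ⋃₀ 𝒰 := by
  simp [stpt]

lemma stpt_insert_of_notMem (hx : x ∉ A) : stpt x (insert A 𝒰) = stpt x 𝒰 := by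
  unfold stpt
  congr 1
  ext P
  simp only [mem_insert_iff, mem_ofPred_eq, or_and_right, or_iff_right_iff_imp]
  rintro ⟨rfl, hxA⟩
  exact absurd hxA hx

lemma sUnion_insert_compl_eq_univ (hA : A ⊆ ⋃₀ 𝒰) : ⋃₀ insert Aᶜ 𝒰 = univ := by
  rw [sUnion_insert, ← compl_subset_iff_union, compl_compl]
  exact hA

end Star

lemma IsOpen.exists_isClosed_subset_cover_inter {X : Type*} [TopologicalSpace X] {D V : Set X}
    (hD : IsClosed D) (hperf : ∀ C : Set D, IsClosed C → IsGδ C) (hV : IsOpen V) :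
    ∃ F : ℕ → Set X, (∀ k, IsClosed (F k)) ∧ (∀ k, F k ⊆ V) ∧ V ∩ D ⊆ ⋃ k, F k := by
  set C : Set D := ((↑) ⁻¹' V)ᶜ
  have hC : IsClosed C := (hV.preimage continuous_subtype_val).isClosed_compl
  obtain ⟨G, hGopen, hCG⟩ := (hperf C hC).eq_iInter_nat
  refine ⟨fun k => (↑) '' (G k)ᶜ, fun k => hD.isClosedMap_subtype_val _ (hGopen k).isClosed_compl,
    ?_, ?_⟩
  · rintro k _ ⟨y, hyG, rfl⟩
    by_contra hyV
    have hyC : y ∈ ⋂ k, G k := hCG ▸ hyV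
    exact hyG (mem_iInter.mp hyC k)
  · rintro x ⟨hxV, hxD⟩
    have hxC : (⟨x, hxD⟩ : D) ∉ ⋂ k, G k := hCG ▸ not_not.mpr hxV
    rw [mem_iInter, not_forall] at hxC
    obtain ⟨k, hk⟩ := hxC
    exact mem_iUnion.mpr ⟨k, ⟨x, hxD⟩, hk, rfl⟩

theorem IsQuasiDevelopment.isDevelopmentAtNonIsolatedPoints_insert {X : Type*}
    [TopologicalSpace X] {𝒰 : ℕ → Set (Set X)} (h𝒰 : IsQuasiDevelopment 𝒰)
    {F : ℕ → ℕ → Set X} (hF : ∀ n k, IsClosed (F n k)) (hF𝒰 : ∀ n k, F n k ⊆ ⋃₀ 𝒰 n)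
    (hcover : ∀ n, ∀ x ∈ nonIsolatedPoints X, x ∈ ⋃₀ 𝒰 n → ∃ k, x ∈ F n k) :
    IsDevelopmentAtNonIsolatedPoints fun m => insert (F m.unpair.1 m.unpair.2)ᶜ (𝒰 m.unpair.1) := by
  obtain ⟨h𝒰open, h𝒰base⟩ := h𝒰
  refine ⟨?_, fun m => sUnion_insert_compl_eq_univ (hF𝒰 _ _), ?_⟩
  · rintro m P (rfl | hP)
    exacts [(hF _ _).isOpen_compl, h𝒰open _ P hP]
  · intro x hx U hxU hU
    obtain ⟨n, hxst, hstU⟩ := h𝒰base x U hxU hU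
    obtain ⟨k, hk⟩ := hcover n x hx (mem_stpt_self_iff.mp hxst)
    refine ⟨Nat.pair n k, ?_⟩
    simpa only [Nat.unpair_pair, stpt_insert_of_notMem (A := (F n k)ᶜ) (not_not.mpr hk)] using hstU

theorem theorem_2_1_3_implies_1_general {X : Type*} [TopologicalSpace X]
    (hq : ∃ 𝒰 : ℕ → Set (Set X), IsQuasiDevelopment 𝒰)
    (hperf : ∀ C : Set ↥(nonIsolatedPoints X), IsClosed C → IsGδ C) :
    ∃ 𝒰 : ℕ → Set (Set X), IsDevelopmentAtNonIsolatedPoints 𝒰 := by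
  obtain ⟨𝒰, h𝒰⟩ := hq
  have hV : ∀ n, IsOpen (⋃₀ 𝒰 n) := fun n => isOpen_sUnion (h𝒰.1 n)
  choose F hF hF𝒰 hcover using fun n =>
    (hV n).exists_isClosed_subset_cover_inter (isClosed_nonIsolatedPoints X) hperf
  exact ⟨_, h𝒰.isDevelopmentAtNonIsolatedPoints_insert hF hF𝒰
    fun n x hx hxV => mem_iUnion.mp (hcover n ⟨hxV, hx⟩)⟩

/-- Theorem 2.1, (3) ⇒ (1). -/
theorem theorem_2_1_3_implies_1 {X : Type*} [TopologicalSpace X] [T2Space X]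
    (hq : ∃ 𝒰 : ℕ → Set (Set X), IsQuasiDevelopment 𝒰)
    (hperf : ∀ C : Set ↥(nonIsolatedPoints X), IsClosed C → IsGδ C) :
    ∃ 𝒰 : ℕ → Set (Set X), IsDevelopmentAtNonIsolatedPoints 𝒰 :=
  theorem_2_1_3_implies_1_general hq hperf
end

section
/- If a Hausdorff topological space X has a development at non-isolated points and the subspace X^d is metacompact, then X has a development at non-isolated points {𝒱_n} in which each 𝒱_n is point-finite at non-isolated points. -/
/-!
Trace each cover `𝒰 n` on `X^d`, refine it there to a point-finite open cover, and lift each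
member `W` to `O ∩ U` with `O` open in `X`, `O ∩ X^d = W` and `U ∈ 𝒰 n` containing `W`; the lifts
meet `X^d` exactly in the `W`, so they are point-finite at non-isolated points. Adding the
singletons of isolated points restores a cover of `X` without enlarging any star at a
non-isolated point, and those stars are contained in the stars of `𝒰 n`.
-/

open Set Topology Filter Function

/-- A topological space is metacompact if every open cover has a point-finite
open refinement. -/
def IsMetacompactSpace (Y : Type*) [TopologicalSpace Y] : Prop :=
  ∀ 𝒰 : Set (Set Y), (∀ U ∈ 𝒰, IsOpen U) → ⋃₀ 𝒰 = Set.univ →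
    ∃ 𝒱 : Set (Set Y), (∀ V ∈ 𝒱, IsOpen V) ∧ ⋃₀ 𝒱 = Set.univ ∧
      (∀ V ∈ 𝒱, ∃ U ∈ 𝒰, V ⊆ U) ∧ ∀ y : Y, {V ∈ 𝒱 | y ∈ V}.Finite

theorem stpt_subset_stpt_of_refines {X : Type*} {𝒱 𝒰 : Set (Set X)}
    (href : ∀ V ∈ 𝒱, ∃ U ∈ 𝒰, V ⊆ U) (x : X) : stpt x 𝒱 ⊆ stpt x 𝒰 := by
  rintro y ⟨V, ⟨hV, hxV⟩, hyV⟩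
  obtain ⟨U, hU, hVU⟩ := href V hV
  exact ⟨U, ⟨hU, hVU hxV⟩, hVU hyV⟩

theorem exists_isOpen_subset_preimage_val_eq {X : Type*} [TopologicalSpace X] {S : Set X}
    {W : Set S} (hW : IsOpen W) {U : Set X} (hU : IsOpen U) (hWU : W ⊆ (↑) ⁻¹' U) :
    ∃ V : Set X, IsOpen V ∧ V ⊆ U ∧ (↑) ⁻¹' V = W := by
  obtain ⟨O, hO, rfl⟩ := isOpen_induced_iff.mp hW
  exact ⟨O ∩ U, hO.inter hU, inter_subset_right, by rw [preimage_inter, inter_eq_left.mpr hWU]⟩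

theorem exists_open_refinement_pointFinite_on {X : Type*} [TopologicalSpace X] {S : Set X}
    (hS : IsMetacompactSpace S) {𝒰 : Set (Set X)} (hopen : ∀ U ∈ 𝒰, IsOpen U)
    (hcov : S ⊆ ⋃₀ 𝒰) :
    ∃ 𝒱 : Set (Set X), (∀ V ∈ 𝒱, IsOpen V) ∧ S ⊆ ⋃₀ 𝒱 ∧ (∀ V ∈ 𝒱, ∃ U ∈ 𝒰, V ⊆ U) ∧
      ∀ x ∈ S, {V ∈ 𝒱 | x ∈ V}.Finite := by
  obtain ⟨𝒲, h𝒲open, h𝒲cov, h𝒲ref, h𝒲fin⟩ := hS (preimage (↑) '' 𝒰)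
    (by rintro _ ⟨U, hU, rfl⟩; exact (hopen U hU).preimage continuous_subtype_val)
    (eq_univ_of_forall fun y => by
      obtain ⟨U, hU, hyU⟩ := hcov y.2
      exact ⟨_, mem_image_of_mem _ hU, hyU⟩)
  have hextend : ∀ W : 𝒲, ∃ V : Set X, IsOpen V ∧ (∃ U ∈ 𝒰, V ⊆ U) ∧ (↑) ⁻¹' V = W.1 := by
    rintro ⟨W, hW⟩
    obtain ⟨_, ⟨U, hU, rfl⟩, hWU⟩ := h𝒲ref W hW
    obtain ⟨V, hV, hVU, hVW⟩ := exists_isOpen_subset_preimage_val_eq (h𝒲open W hW) (hopen U hU) hWU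
    exact ⟨V, hV, ⟨U, hU, hVU⟩, hVW⟩
  choose V hVopen hVref hVW using hextend
  have mem_V {x : X} (hx : x ∈ S) (W : 𝒲) : x ∈ V W ↔ (⟨x, hx⟩ : S) ∈ W.1 := by
    rw [← hVW]; rfl
  refine ⟨range V, forall_mem_range.2 hVopen, fun x hx => ?_, forall_mem_range.2 hVref,
    fun x hx => ?_⟩
  · obtain ⟨W, hW, hxW⟩ : (⟨x, hx⟩ : S) ∈ ⋃₀ 𝒲 := h𝒲cov ▸ mem_univ _
    exact ⟨V ⟨W, hW⟩, mem_range_self _, (mem_V hx _).2 hxW⟩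
  · refine (((h𝒲fin ⟨x, hx⟩).preimage Subtype.val_injective.injOn).image V).subset ?_
    rintro _ ⟨⟨W, rfl⟩, hxW⟩
    exact ⟨W, ⟨W.2, (mem_V hx W).1 hxW⟩, rfl⟩

def isolatedSingletons (X : Type*) [TopologicalSpace X] : Set (Set X) :=
  (fun x => {x}) '' (nonIsolatedPoints X)ᶜ

section isolatedSingletons

variable {X : Type*} [TopologicalSpace X]

theorem isOpen_of_mem_isolatedSingletons {V : Set X} (hV : V ∈ isolatedSingletons X) :
    IsOpen V := by
  obtain ⟨x, hx, rfl⟩ := hV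
  exact not_not.mp hx

theorem notMem_of_mem_isolatedSingletons {x : X} (hx : x ∈ nonIsolatedPoints X) {V : Set X}
    (hV : V ∈ isolatedSingletons X) : x ∉ V := by
  obtain ⟨z, hz, rfl⟩ := hV
  rintro rfl
  exact hz hx

theorem sep_union_isolatedSingletons {x : X} (hx : x ∈ nonIsolatedPoints X) (𝒱 : Set (Set X)) :
    {V ∈ 𝒱 ∪ isolatedSingletons X | x ∈ V} = {V ∈ 𝒱 | x ∈ V} := by
  ext V
  simp only [mem_ofPred_eq, mem_union, and_congr_left_iff, or_iff_left_iff_imp]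
  exact fun hxV hV => absurd hxV (notMem_of_mem_isolatedSingletons hx hV)

theorem stpt_union_isolatedSingletons {x : X} (hx : x ∈ nonIsolatedPoints X) (𝒱 : Set (Set X)) :
    stpt x (𝒱 ∪ isolatedSingletons X) = stpt x 𝒱 := by
  rw [stpt, sep_union_isolatedSingletons hx, stpt]

theorem IsDevelopmentAtNonIsolatedPoints.union_isolatedSingletons {𝒰 𝒱 : ℕ → Set (Set X)}
    (h𝒰 : IsDevelopmentAtNonIsolatedPoints 𝒰) (hopen : ∀ n, ∀ V ∈ 𝒱 n, IsOpen V)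
    (hcov : ∀ n, nonIsolatedPoints X ⊆ ⋃₀ 𝒱 n) (href : ∀ n, ∀ V ∈ 𝒱 n, ∃ U ∈ 𝒰 n, V ⊆ U) :
    IsDevelopmentAtNonIsolatedPoints fun n => 𝒱 n ∪ isolatedSingletons X := by
  refine ⟨fun n V hV => hV.elim (hopen n V) isOpen_of_mem_isolatedSingletons,
    fun n => eq_univ_of_forall fun x => ?_, fun x hx U hxU hU => ?_⟩
  · by_cases hx : x ∈ nonIsolatedPoints X
    · exact sUnion_mono subset_union_left (hcov n hx)
    · exact ⟨{x}, Or.inr ⟨x, hx, rfl⟩, rfl⟩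
  · obtain ⟨n, hn⟩ := h𝒰.2.2 x hx U hxU hU
    refine ⟨n, Subset.trans ?_ hn⟩
    rw [stpt_union_isolatedSingletons hx]
    exact stpt_subset_stpt_of_refines (href n) x

end isolatedSingletons

theorem lemma_3_2_4_implies_3_general {X : Type*} [TopologicalSpace X]
    (hdev : ∃ 𝒰 : ℕ → Set (Set X), IsDevelopmentAtNonIsolatedPoints 𝒰)
    (hmeta : IsMetacompactSpace ↥(nonIsolatedPoints X)) :
    ∃ 𝒱 : ℕ → Set (Set X), IsDevelopmentAtNonIsolatedPoints 𝒱 ∧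
      ∀ n, ∀ x ∈ nonIsolatedPoints X, {V ∈ 𝒱 n | x ∈ V}.Finite := by
  obtain ⟨𝒰, h𝒰⟩ := hdev
  choose 𝒱 hopen hcov href hfin using fun n =>
    exists_open_refinement_pointFinite_on hmeta (h𝒰.1 n) (h𝒰.2.1 n ▸ subset_univ _)
  refine ⟨fun n => 𝒱 n ∪ isolatedSingletons X, h𝒰.union_isolatedSingletons hopen hcov href,
    fun n x hx => ?_⟩
  rw [sep_union_isolatedSingletons hx]
  exact hfin n x hx

/-- Lemma 3.2, (4) ⇒ (3): a development at non-isolated points together with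
metacompactness of `X^d` yields a point-finite development at non-isolated points. -/
theorem lemma_3_2_4_implies_3 {X : Type*} [TopologicalSpace X] [T2Space X]
    (hdev : ∃ 𝒰 : ℕ → Set (Set X), IsDevelopmentAtNonIsolatedPoints 𝒰)
    (hmeta : IsMetacompactSpace ↥(nonIsolatedPoints X)) :
    ∃ 𝒱 : ℕ → Set (Set X), IsDevelopmentAtNonIsolatedPoints 𝒱 ∧
      ∀ n, ∀ x ∈ nonIsolatedPoints X, {V ∈ 𝒱 n | x ∈ V}.Finite :=
  lemma_3_2_4_implies_3_general hdev hmeta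
end
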